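/- arXiv:2107.13062 — 5 statements merged into one kernel-verified Lean document; each statement's English description precedes it below -/
import Mathlib

section
/- Let g : ℝ → ℝ³ be differentiable at t₀ with g(t₀) ≠ 0, let n(t) = g(t)/‖g(t)‖ and A(t) = (I − n(t) n(t)ᵀ)/‖g(t)‖ (a symmetric 3×3 matrix). Then A is differentiable at t₀ and A'(t₀) = −(1/‖g(t₀)‖) · [ (A(t₀) g'(t₀)) n(t₀)ᵀ + n(t₀) (A(t₀) g'(t₀))ᵀ + (n(t₀) · g'(t₀)) A(t₀) ]. -/
open scoped RealInnerProductSpace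

noncomputable section

/-- Outer product `u vᵀ` as a continuous linear map on Euclidean 3-space. -/
def outer (u v : EuclideanSpace ℝ (Fin 3)) :
    EuclideanSpace ℝ (Fin 3) →L[ℝ] EuclideanSpace ℝ (Fin 3) :=
  (innerSL ℝ v).smulRight u

/-- Derivative of the auxiliary tensor `A = (I - n nᵀ)/‖g‖` appearing in the
Kirchhoff–Love shell normal evolution:
`A'(t₀) = -(1/‖g t₀‖) [(A t₀ g') (n t₀)ᵀ + n t₀ (A t₀ g')ᵀ + ⟪n t₀, g'⟫ A t₀]`. -/
theorem auxiliary_tensor_derivative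
    (g : ℝ → EuclideanSpace ℝ (Fin 3)) (g' : EuclideanSpace ℝ (Fin 3)) (t₀ : ℝ)
    (hg : HasDerivAt g g' t₀) (hne : g t₀ ≠ 0)
    (n : ℝ → EuclideanSpace ℝ (Fin 3)) (hn : ∀ t, n t = ‖g t‖⁻¹ • g t)
    (A : ℝ → EuclideanSpace ℝ (Fin 3) →L[ℝ] EuclideanSpace ℝ (Fin 3))
    (hA : ∀ t, A t = ‖g t‖⁻¹ •
      (ContinuousLinearMap.id ℝ (EuclideanSpace ℝ (Fin 3)) - outer (n t) (n t))) :
    HasDerivAt A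
      (-(‖g t₀‖⁻¹) •
        (outer (A t₀ g') (n t₀) + outer (n t₀) (A t₀ g') + ⟪n t₀, g'⟫ • A t₀)) t₀ := by
  have hr : ‖g t₀‖ ≠ 0 := norm_ne_zero_iff.mpr hne
  -- derivative of the norm
  have hnorm : HasDerivAt (fun t => ‖g t‖) ⟪n t₀, g'⟫ t₀ := by
    have h1 : HasDerivAt (fun t => Real.sqrt (‖g t‖ ^ 2))
        (1 / (2 * Real.sqrt (‖g t₀‖ ^ 2)) * (2 * ⟪g t₀, g'⟫)) t₀ :=
      (Real.hasDerivAt_sqrt (by positivity)).comp t₀ hg.norm_sq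
    have h2 : (fun t => Real.sqrt (‖g t‖ ^ 2)) = fun t => ‖g t‖ := by
      funext t; rw [Real.sqrt_sq (norm_nonneg _)]
    rw [h2] at h1
    convert h1 using 1
    rw [Real.sqrt_sq (norm_nonneg _), hn, real_inner_smul_left]
    field_simp
  -- derivative of the inverse norm
  have hinv : HasDerivAt (fun t => ‖g t‖⁻¹) (-⟪n t₀, g'⟫ / ‖g t₀‖ ^ 2) t₀ := hnorm.inv hr
  -- derivative of n
  have hnd : HasDerivAt n (A t₀ g') t₀ := by
    have h1 := hinv.smul hg
    have h2 : ((fun t => ‖g t‖⁻¹) • g) = n := by funext t; rw [hn]; rfl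
    rw [h2] at h1
    refine h1.congr_deriv ?_
    rw [hA, hn]
    simp only [ContinuousLinearMap.smul_apply, ContinuousLinearMap.sub_apply,
      ContinuousLinearMap.id_apply, outer, ContinuousLinearMap.smulRight_apply,
      innerSL_apply_apply, real_inner_smul_left]
    match_scalars <;> ring
  set m := A t₀ g' with hm
  -- derivative of outer (n t) (n t)
  have houter : HasDerivAt (fun t => outer (n t) (n t)) (outer m (n t₀) + outer (n t₀) m) t₀ := by
    have hin : HasDerivAt (fun t => innerSL ℝ (n t)) (innerSL ℝ m) t₀ :=
      (innerSL ℝ (E := EuclideanSpace ℝ (Fin 3))).hasFDerivAt.comp_hasDerivAt t₀ hnd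
    have hpair : HasDerivAt
        (fun t => ((innerSL ℝ (n t) : EuclideanSpace ℝ (Fin 3) →L[ℝ] ℝ), n t))
        (innerSL ℝ m, m) t₀ := hin.prodMk hnd
    have hb := (isBoundedBilinearMap_smulRight (𝕜 := ℝ)
      (E := EuclideanSpace ℝ (Fin 3)) (F := EuclideanSpace ℝ (Fin 3))).hasFDerivAt
      (innerSL ℝ (n t₀), n t₀)
    have h := hb.comp_hasDerivAt t₀ hpair
    convert h using 1 <;> rfl
  -- derivative of A
  have hId : HasDerivAt (fun _ : ℝ => ContinuousLinearMap.id ℝ (EuclideanSpace ℝ (Fin 3)))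
      0 t₀ := hasDerivAt_const _ _
  have hAd := hinv.smul (hId.sub houter)
  have h2 : (fun t => ‖g t‖⁻¹) • ((fun _ : ℝ => ContinuousLinearMap.id ℝ (EuclideanSpace ℝ (Fin 3)))
      - fun t => outer (n t) (n t)) = A := by
    funext t; rw [hA]; rfl
  rw [h2] at hAd
  refine hAd.congr_deriv ?_
  rw [hA t₀]
  simp only [Pi.sub_apply]
  match_scalars <;> ring

end
end

section
/- Fix an integer n ≥ 2, a finite index set 𝒬, points ξ_Q ∈ ℝ², and real weights ω_Q and areas A_Q for Q ∈ 𝒬. Let Ξ(ξ) denote the column vector of all monomials ξ₁^i ξ₂^j with 1 ≤ i + j ≤ n (in a fixed order whose first five entries are ξ₁, ξ₂, ξ₁², ξ₁ξ₂, ξ₂²), and suppose the moment matrix M = Σ_{Q∈𝒬} ω_Q A_Q Ξ(ξ_Q) Ξ(ξ_Q)ᵀ is invertible. Let Ξ̃ be the 5 × dim matrix whose rows extract, respectively, the ξ₁-entry, the ξ₂-entry, twice the ξ₁²-entry, the ξ₁ξ₂-entry, and twice the ξ₂²-entry, and define the kernel vector Φ(ξ_Q) = ω_Q Ξ̃ M⁻¹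 Ξ(ξ_Q) ∈ ℝ⁵. Then for every real polynomial p in two variables of total degree at most n, Σ_{Q∈𝒬} (p(ξ_Q) − p(0)) Φ(ξ_Q) A_Q = ( ∂p/∂ξ₁(0), ∂p/∂ξ₂(0), ∂²p/∂ξ₁²(0), ∂²p/∂ξ₁∂ξ₂(0), ∂²p/∂ξ₂²(0) ). -/
open Matrix

/-- Index set for the monomials `ξ₁^i ξ₂^j` with `1 ≤ i + j ≤ n`. -/
abbrev MonIdx (n : ℕ) : Type :=
  {ij : Fin (n + 1) × Fin (n + 1) // 1 ≤ (ij.1 : ℕ) + (ij.2 : ℕ) ∧ (ij.1 : ℕ) + (ij.2 : ℕ) ≤ n}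

/-- The vector of monomials `Ξ(ξ)` (indexed by the exponent pairs `(i,j)` with
`1 ≤ i + j ≤ n`; the entries corresponding to `ξ₁, ξ₂, ξ₁², ξ₁ξ₂, ξ₂²` are the
ones extracted by `XiTilde`). -/
def Xi (n : ℕ) (ξ : Fin 2 → ℝ) : MonIdx n → ℝ :=
  fun k => ξ 0 ^ (k.1.1 : ℕ) * ξ 1 ^ (k.1.2 : ℕ)

/-- The `5 × dim` matrix `Ξ̃` whose rows extract, respectively, the `ξ₁`-entry,
the `ξ₂`-entry, twice the `ξ₁²`-entry, the `ξ₁ξ₂`-entry and twice the `ξ₂²`-entry. -/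
def XiTilde (n : ℕ) : Matrix (Fin 5) (MonIdx n) ℝ :=
  fun r k =>
    if (((k.1.1 : ℕ), (k.1.2 : ℕ)) : ℕ × ℕ) = ![(1, 0), (0, 1), (2, 0), (1, 1), (0, 2)] r then
      ![1, 1, 2, 1, 2] r
    else 0

/-- Exactness (polynomial reproduction) of the reproducing-kernel peridynamic
differential operator: with an invertible moment matrix, the discrete operator
built from the kernel vector `Φ = ω Ξ̃ M⁻¹ Ξ` recovers the exact gradient and
Hessian at the origin of every polynomial of total degree at most `n`. -/
theorem rk_kernel_exactness
    (n : ℕ) (hn : 2 ≤ n) {𝒬 : Type} [Fintype 𝒬]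
    (ξ : 𝒬 → Fin 2 → ℝ) (ω A : 𝒬 → ℝ)
    (M : Matrix (MonIdx n) (MonIdx n) ℝ)
    (hM : M = ∑ Q : 𝒬, (ω Q * A Q) • vecMulVec (Xi n (ξ Q)) (Xi n (ξ Q)))
    (hMinv : IsUnit M.det)
    (Φ : 𝒬 → Fin 5 → ℝ)
    (hΦ : ∀ Q, Φ Q = ω Q • (XiTilde n *ᵥ (M⁻¹ *ᵥ Xi n (ξ Q)))) :
    ∀ p : MvPolynomial (Fin 2) ℝ, p.totalDegree ≤ n →
      (∑ Q : 𝒬, ((MvPolynomial.eval (ξ Q) p - MvPolynomial.eval 0 p) * A Q) • Φ Q)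
        = ![MvPolynomial.eval 0 (MvPolynomial.pderiv 0 p),
            MvPolynomial.eval 0 (MvPolynomial.pderiv 1 p),
            MvPolynomial.eval 0 (MvPolynomial.pderiv 0 (MvPolynomial.pderiv 0 p)),
            MvPolynomial.eval 0 (MvPolynomial.pderiv 1 (MvPolynomial.pderiv 0 p)),
            MvPolynomial.eval 0 (MvPolynomial.pderiv 1 (MvPolynomial.pderiv 1 p))] := by
  classical
  -- Key reproducing identity
  have key : ∀ c : MonIdx n → ℝ,
      ∑ Q : 𝒬, ((∑ k, c k * Xi n (ξ Q) k) * A Q) • Φ Q = XiTilde n *ᵥ c := by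
    intro c
    have hMc : M *ᵥ c = ∑ Q : 𝒬, ((∑ k, c k * Xi n (ξ Q) k) * A Q * ω Q) • Xi n (ξ Q) := by
      funext i
      rw [hM]
      simp only [Matrix.mulVec, dotProduct, Finset.sum_apply, Matrix.sum_apply,
        Matrix.smul_apply, Matrix.vecMulVec_apply, Pi.smul_apply, smul_eq_mul,
        Finset.sum_mul, Finset.mul_sum]
      rw [Finset.sum_comm]
      refine Finset.sum_congr rfl fun Q _ => Finset.sum_congr rfl fun k _ => by ring
    calc ∑ Q : 𝒬, ((∑ k, c k * Xi n (ξ Q) k) * A Q) • Φ Q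
        = ∑ Q : 𝒬, (XiTilde n).mulVecLin ((M⁻¹).mulVecLin
            (((∑ k, c k * Xi n (ξ Q) k) * A Q * ω Q) • Xi n (ξ Q))) := by
          refine Finset.sum_congr rfl fun Q _ => ?_
          rw [hΦ Q]
          simp only [Matrix.mulVecLin_apply, Matrix.mulVec_smul, smul_smul]
      _ = (XiTilde n).mulVecLin ((M⁻¹).mulVecLin (M *ᵥ c)) := by
          rw [← map_sum, ← map_sum, hMc]
      _ = XiTilde n *ᵥ c := by
          simp only [Matrix.mulVecLin_apply, Matrix.mulVec_mulVec,
            Matrix.nonsing_inv_mul M hMinv, Matrix.one_mulVec]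
  -- evaluation helpers
  have heval0 : ∀ (w : Fin 2 →₀ ℕ) (b : ℝ),
      MvPolynomial.eval (0 : Fin 2 → ℝ) (MvPolynomial.monomial w b)
        = if w = 0 then b else 0 := by
    intro w b
    rw [MvPolynomial.eval_monomial]
    split_ifs with h
    · subst h; simp
    · obtain ⟨i, hi⟩ := Finsupp.ne_iff.mp h
      rw [Finsupp.prod, Finset.prod_eq_zero (Finsupp.mem_support_iff.mpr (by simpa using hi))
        (by simp [zero_pow (by simpa using hi)]), mul_zero]
  have hevalx : ∀ (x : Fin 2 → ℝ) (w : Fin 2 →₀ ℕ) (b : ℝ),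
      MvPolynomial.eval x (MvPolynomial.monomial w b) = b * (x 0 ^ w 0 * x 1 ^ w 1) := by
    intro x w b
    rw [MvPolynomial.eval_monomial, Finsupp.prod_fintype _ _ (fun i => pow_zero _),
      Fin.prod_univ_two]
  have hw0 : ∀ w : Fin 2 →₀ ℕ, w = 0 ↔ w 0 = 0 ∧ w 1 = 0 := by
    intro w
    constructor
    · rintro rfl; simp
    · rintro ⟨h0, h1⟩; ext i; fin_cases i <;> simp [h0, h1]
  -- the monomial case
  have hmono : ∀ (v : Fin 2 →₀ ℕ), v 0 + v 1 ≤ n → ∀ b : ℝ,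
      (∑ Q : 𝒬, ((MvPolynomial.eval (ξ Q) (MvPolynomial.monomial v b)
          - MvPolynomial.eval 0 (MvPolynomial.monomial v b)) * A Q) • Φ Q)
        = ![MvPolynomial.eval 0 (MvPolynomial.pderiv 0 (MvPolynomial.monomial v b)),
            MvPolynomial.eval 0 (MvPolynomial.pderiv 1 (MvPolynomial.monomial v b)),
            MvPolynomial.eval 0 (MvPolynomial.pderiv 0 (MvPolynomial.pderiv 0 (MvPolynomial.monomial v b))),
            MvPolynomial.eval 0 (MvPolynomial.pderiv 1 (MvPolynomial.pderiv 0 (MvPolynomial.monomial v b))),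
            MvPolynomial.eval 0 (MvPolynomial.pderiv 1 (MvPolynomial.pderiv 1 (MvPolynomial.monomial v b)))] := by
    intro v hv b
    by_cases h0 : v = 0
    · subst h0
      funext r
      fin_cases r <;>
        simp [hevalx, MvPolynomial.pderiv_monomial]
    · have h1 : 1 ≤ v 0 + v 1 := by
        rcases Nat.eq_zero_or_pos (v 0 + v 1) with h | h
        · exact absurd ((hw0 v).mpr ⟨by omega, by omega⟩) h0
        · exact h
      set k0 : MonIdx n := ⟨(⟨v 0, by omega⟩, ⟨v 1, by omega⟩), h1, hv⟩ with hk0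
      have hL : ∀ Q : 𝒬, MvPolynomial.eval (ξ Q) (MvPolynomial.monomial v b)
          - MvPolynomial.eval 0 (MvPolynomial.monomial v b)
          = ∑ k, (if k = k0 then b else 0) * Xi n (ξ Q) k := by
        intro Q
        rw [hevalx, heval0, if_neg h0, sub_zero]
        simp only [ite_mul, zero_mul, Finset.sum_ite_eq', Finset.mem_univ, if_true]
        rfl
      calc (∑ Q : 𝒬, ((MvPolynomial.eval (ξ Q) (MvPolynomial.monomial v b)
              - MvPolynomial.eval 0 (MvPolynomial.monomial v b)) * A Q) • Φ Q)
          = ∑ Q : 𝒬, ((∑ k, (if k = k0 then b else 0) * Xi n (ξ Q) k) * A Q) • Φ Q := by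
            exact Finset.sum_congr rfl fun Q _ => by rw [hL Q]
        _ = XiTilde n *ᵥ (fun k => if k = k0 then b else 0) := key _
        _ = _ := ?_
      funext r
      rw [hw0] at h0
      fin_cases r <;>
        simp only [Matrix.mulVec, dotProduct, XiTilde, hk0, mul_ite, mul_zero,
          Finset.sum_ite_eq', Finset.mem_univ, if_true, ite_mul, zero_mul,
          MvPolynomial.pderiv_monomial, heval0, hw0, Finsupp.tsub_apply, Finsupp.single_apply,
          Prod.mk.injEq, Fin.isValue, Matrix.cons_val_zero, Matrix.cons_val_one,
          Matrix.head_cons, Matrix.cons_val_two, Matrix.tail_cons, Matrix.cons_val_three,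
          Matrix.cons_val_four, Matrix.head_fin_const] <;>
        norm_num
      · split_ifs with hA hB hB'
        · rw [hA.1]; norm_num; try ring
        · exfalso; omega
        · exfalso; omega
        · rfl
      · split_ifs with hA hB hB'
        · rw [hA.2]; norm_num; try ring
        · exfalso; omega
        · exfalso; omega
        · rfl
      · split_ifs with hA hB hB'
        · rw [hA.1]; norm_num; try ring
        · exfalso; omega
        · have e : v 0 = 1 := by omega
          rw [e]; norm_num; try ring
        · rfl
      · split_ifs with hA hB hB'
        · rw [hA.1, hA.2]; norm_num; try ring
        · exfalso; omega
        · rcases (show v 0 = 0 ∨ v 1 = 0 by omega) with e | e <;> rw [e] <;> norm_num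
        · rfl
      · split_ifs with hA hB hB'
        · rw [hA.2]; norm_num; try ring
        · exfalso; omega
        · have e : v 1 = 1 := by omega
          rw [e]; norm_num; try ring
        · rfl

  have expand : ∀ q r : MvPolynomial (Fin 2) ℝ,
      (∑ Q : 𝒬, ((MvPolynomial.eval (ξ Q) (q + r) - MvPolynomial.eval 0 (q + r)) * A Q) • Φ Q)
        = (∑ Q : 𝒬, ((MvPolynomial.eval (ξ Q) q - MvPolynomial.eval 0 q) * A Q) • Φ Q)
          + (∑ Q : 𝒬, ((MvPolynomial.eval (ξ Q) r - MvPolynomial.eval 0 r) * A Q) • Φ Q) := by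
    intro q r
    rw [← Finset.sum_add_distrib]
    refine Finset.sum_congr rfl fun Q _ => ?_
    rw [← add_smul]
    congr 1
    simp only [map_add]
    ring
  have vecadd : ∀ x0 x1 x2 x3 x4 y0 y1 y2 y3 y4 : ℝ,
      (![x0, x1, x2, x3, x4] + ![y0, y1, y2, y3, y4])
        = ![x0 + y0, x1 + y1, x2 + y2, x3 + y3, x4 + y4] := by
    intros
    funext r
    fin_cases r <;> rfl
  intro p hp
  have hsupp : ∀ v ∈ p.support, v 0 + v 1 ≤ n := by
    intro v hvs
    have h := MvPolynomial.le_totalDegree hvs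
    have hsum : v.sum (fun _ e => e) = v 0 + v 1 := by
      rw [Finsupp.sum_fintype _ _ (fun i => rfl), Fin.sum_univ_two]
    omega
  suffices H : ∀ (s : Finset (Fin 2 →₀ ℕ)) (g : (Fin 2 →₀ ℕ) → ℝ),
      (∀ v ∈ s, v 0 + v 1 ≤ n) →
      (∑ Q : 𝒬, ((MvPolynomial.eval (ξ Q) (∑ v ∈ s, MvPolynomial.monomial v (g v))
          - MvPolynomial.eval 0 (∑ v ∈ s, MvPolynomial.monomial v (g v))) * A Q) • Φ Q)
        = ![MvPolynomial.eval 0 (MvPolynomial.pderiv 0 (∑ v ∈ s, MvPolynomial.monomial v (g v))),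
            MvPolynomial.eval 0 (MvPolynomial.pderiv 1 (∑ v ∈ s, MvPolynomial.monomial v (g v))),
            MvPolynomial.eval 0 (MvPolynomial.pderiv 0 (MvPolynomial.pderiv 0 (∑ v ∈ s, MvPolynomial.monomial v (g v)))),
            MvPolynomial.eval 0 (MvPolynomial.pderiv 1 (MvPolynomial.pderiv 0 (∑ v ∈ s, MvPolynomial.monomial v (g v)))),
            MvPolynomial.eval 0 (MvPolynomial.pderiv 1 (MvPolynomial.pderiv 1 (∑ v ∈ s, MvPolynomial.monomial v (g v))))] by
    have h := H p.support (fun v => MvPolynomial.coeff v p) hsupp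
    rwa [← MvPolynomial.as_sum p] at h
  intro s
  induction s using Finset.induction_on with
  | empty =>
      intro g _
      simp only [Finset.sum_empty, map_zero, sub_zero, zero_mul, zero_smul,
        Finset.sum_const_zero]
      funext r
      fin_cases r <;> rfl
  | @insert a s ha ih =>
      intro g hs
      simp only [Finset.sum_insert ha]
      rw [expand (MvPolynomial.monomial a (g a)) (∑ v ∈ s, MvPolynomial.monomial v (g v)),
        hmono a (hs a (Finset.mem_insert_self a s)) (g a),
        ih g (fun v hv => hs v (Finset.mem_insert_of_mem hv))]
      simp only [map_add]
      exact vecadd _ _ _ _ _ _ _ _ _ _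
end

section
/- Let Ω be a skew-symmetric real 3×3 matrix (Ωᵀ = −Ω) and Δt a real number. Then the matrix I − (Δt/2) Ω is invertible, and for every R ∈ SO(3) (real 3×3 matrix with RᵀR = I and det R = 1), the matrix R⁺ = (I − (Δt/2) Ω)⁻¹ (I + (Δt/2) Ω) R again satisfies (R⁺)ᵀ R⁺ = I and det R⁺ = 1. -/
open Matrix

/-- The Flanagan–Taylor (Cayley-transform) rotation update: for skew-symmetric `Ω`,
`I - (Δt/2) Ω` is invertible, and `R⁺ = (I - (Δt/2)Ω)⁻¹ (I + (Δt/2)Ω) R` maps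
rotation matrices to rotation matrices. -/
theorem rotation_update_preserves_SO3
    (Ω : Matrix (Fin 3) (Fin 3) ℝ) (hΩ : Ωᵀ = -Ω) (Δt : ℝ) :
    IsUnit ((1 : Matrix (Fin 3) (Fin 3) ℝ) - (Δt / 2) • Ω).det ∧
      ∀ R : Matrix (Fin 3) (Fin 3) ℝ, Rᵀ * R = 1 → R.det = 1 →
        ∀ Rp : Matrix (Fin 3) (Fin 3) ℝ,
          Rp = ((1 : Matrix (Fin 3) (Fin 3) ℝ) - (Δt / 2) • Ω)⁻¹ *
                 ((1 : Matrix (Fin 3) (Fin 3) ℝ) + (Δt / 2) • Ω) * R →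
          Rpᵀ * Rp = 1 ∧ Rp.det = 1 := by
  set c : ℝ := Δt / 2 with hc
  set A : Matrix (Fin 3) (Fin 3) ℝ := 1 - c • Ω with hA
  set B : Matrix (Fin 3) (Fin 3) ℝ := 1 + c • Ω with hB
  -- entries of Ω
  have hskew : ∀ i j, Ω j i = -Ω i j := by
    intro i j
    have := congrFun (congrFun hΩ i) j
    simpa [Matrix.transpose_apply] using this
  have hdiag : ∀ i, Ω i i = 0 := by
    intro i; have := hskew i i; linarith
  -- determinant of A is positive
  have hdetA : A.det = 1 + c^2 * ((Ω 0 1)^2 + (Ω 0 2)^2 + (Ω 1 2)^2) := by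
    rw [hA]
    rw [Matrix.det_fin_three]
    simp [Matrix.sub_apply, Matrix.smul_apply, Matrix.one_apply, hdiag,
      hskew 0 1, hskew 0 2, hskew 1 2]
    ring
  have hdetApos : 0 < A.det := by
    rw [hdetA]; nlinarith [sq_nonneg (Ω 0 1), sq_nonneg (Ω 0 2), sq_nonneg (Ω 1 2), sq_nonneg c]
  have hdetAunit : IsUnit A.det := isUnit_iff_ne_zero.mpr (ne_of_gt hdetApos)
  refine ⟨hdetAunit, ?_⟩
  intro R hRorth hRdet Rp hRp
  -- transpose relations
  have hAT : Aᵀ = B := by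
    rw [hA, hB, Matrix.transpose_sub, Matrix.transpose_smul, hΩ, Matrix.transpose_one]
    simp [sub_neg_eq_add]
  have hBT : Bᵀ = A := by
    rw [hB, hA, Matrix.transpose_add, Matrix.transpose_smul, hΩ, Matrix.transpose_one]
    simp [sub_eq_add_neg]
  have hdetB : B.det = A.det := by rw [← hAT, Matrix.det_transpose]
  have hdetBunit : IsUnit B.det := hdetB ▸ hdetAunit
  -- commutation
  have hcomm : A * B = B * A := by
    rw [hA, hB]
    simp only [mul_add, add_mul, mul_sub, sub_mul, Matrix.smul_mul, Matrix.mul_smul,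
      Matrix.one_mul, Matrix.mul_one, smul_smul]
    abel
  have hAinvA : A⁻¹ * A = 1 := Matrix.nonsing_inv_mul A hdetAunit
  have hAAinv : A * A⁻¹ = 1 := Matrix.mul_nonsing_inv A hdetAunit
  have hBBinv : B * B⁻¹ = 1 := Matrix.mul_nonsing_inv B hdetBunit
  have hBinvB : B⁻¹ * B = 1 := Matrix.nonsing_inv_mul B hdetBunit
  have h1 : B * (A * B⁻¹) = A := by
    rw [← Matrix.mul_assoc, ← hcomm, Matrix.mul_assoc, hBBinv, Matrix.mul_one]
  have hBinvcomm : A * B⁻¹ = B⁻¹ * A := by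
    calc A * B⁻¹ = B⁻¹ * (B * (A * B⁻¹)) := by
          rw [← Matrix.mul_assoc, hBinvB, Matrix.one_mul]
      _ = B⁻¹ * A := by rw [h1]
  have key : (A⁻¹ * B)ᵀ * (A⁻¹ * B) = 1 := by
    rw [Matrix.transpose_mul, Matrix.transpose_nonsing_inv, hAT, hBT, hBinvcomm,
      Matrix.mul_assoc, ← Matrix.mul_assoc A, hAAinv, Matrix.one_mul, hBinvB]
  constructor
  · rw [hRp, Matrix.transpose_mul, Matrix.mul_assoc, ← Matrix.mul_assoc ((A⁻¹ * B)ᵀ),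
      key, Matrix.one_mul, hRorth]
  · rw [hRp, Matrix.det_mul, Matrix.det_mul, Matrix.det_nonsing_inv, hdetB, hRdet, mul_one]
    exact Ring.inverse_mul_cancel _ hdetAunit
end

section
/- Let V be a symmetric real 3×3 matrix and s ∈ ℝ³, and let S be the skew-symmetric matrix with axial vector s, i.e. S x = s × x for all x ∈ ℝ³. Then the matrix S V + V S is skew-symmetric, and its axial vector is (tr(V) I − V) s; that is, (S V + V S) x = ((tr(V) I − V) s) × x for all x ∈ ℝ³. -/
open Matrix

/-- For a symmetric `V` and a skew-symmetric `S` with axial vector `s`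
(`S x = s × x`), the matrix `S V + V S` is skew-symmetric with axial vector
`(tr(V) I - V) s`. -/
theorem skew_sym_anticommutator_axial
    (V S : Matrix (Fin 3) (Fin 3) ℝ) (hV : Vᵀ = V) (s : Fin 3 → ℝ)
    (hS : ∀ x : Fin 3 → ℝ, S *ᵥ x = s ⨯₃ x) :
    (S * V + V * S)ᵀ = -(S * V + V * S) ∧
      ∀ x : Fin 3 → ℝ,
        (S * V + V * S) *ᵥ x = ((V.trace • (1 : Matrix (Fin 3) (Fin 3) ℝ) - V) *ᵥ s) ⨯₃ x := by
  have hSe : ∀ i j : Fin 3, S i j = (s ⨯₃ (Pi.single j 1)) i := by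
    intro i j
    have := congrFun (hS (Pi.single j 1)) i
    simpa [mulVec_single] using this
  have hVe : ∀ i j : Fin 3, V j i = V i j := by
    intro i j
    have := congrFun (congrFun hV i) j
    simpa [transpose_apply] using this
  constructor
  · ext i j
    fin_cases i <;> fin_cases j <;>
      simp [Matrix.mul_apply, Fin.sum_univ_three, hSe, crossProduct,
        hVe 0 1, hVe 0 2, hVe 1 2, Pi.single] <;> ring
  · intro x
    funext i
    fin_cases i <;>
      simp [Matrix.mulVec, Matrix.mul_apply, dotProduct, Fin.sum_univ_three, hSe,
        crossProduct, Matrix.trace, Matrix.diag, Matrix.one_apply, Pi.single,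
        hVe 0 1, hVe 0 2, hVe 1 2] <;> ring
end

section
/- Let V and D be symmetric real 3×3 matrices and W a skew-symmetric real 3×3 matrix with axial vector w (W x = w × x for all x). Assume tr(V) I − V is invertible. Let z ∈ ℝ³ be the axial vector of the skew-symmetric matrix D V − V D, set ω = w + (tr(V) I − V)⁻¹ z, and let Ω be the skew-symmetric matrix with axial vector ω. Then the matrix (D + W) V − V Ω is symmetric. -/
open Matrix

/-- The key property of the Flanagan–Taylor rotation algorithm: with the spin
`Ω` having axial vector `ω = w + (tr(V) I - V)⁻¹ z`, where `z` is the axial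
vector of `D V - V D`, the matrix `(D + W) V - V Ω` is symmetric. -/
theorem flanagan_taylor_symmetry
    (V D W : Matrix (Fin 3) (Fin 3) ℝ) (hV : Vᵀ = V) (hD : Dᵀ = D)
    (hW : Wᵀ = -W) (w : Fin 3 → ℝ) (hw : ∀ x : Fin 3 → ℝ, W *ᵥ x = w ⨯₃ x)
    (hinv : IsUnit (V.trace • (1 : Matrix (Fin 3) (Fin 3) ℝ) - V).det)
    (z : Fin 3 → ℝ) (hz : ∀ x : Fin 3 → ℝ, (D * V - V * D) *ᵥ x = z ⨯₃ x)
    (ω : Fin 3 → ℝ)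
    (hω : ω = w + (V.trace • (1 : Matrix (Fin 3) (Fin 3) ℝ) - V)⁻¹ *ᵥ z)
    (Ω : Matrix (Fin 3) (Fin 3) ℝ) (hΩ : ∀ x : Fin 3 → ℝ, Ω *ᵥ x = ω ⨯₃ x) :
    ((D + W) * V - V * Ω)ᵀ = (D + W) * V - V * Ω := by
  set A := V.trace • (1 : Matrix (Fin 3) (Fin 3) ℝ) - V with hA
  set u := A⁻¹ *ᵥ z with hu
  have hAu : A *ᵥ u = z := by
    rw [hu, mulVec_mulVec, Matrix.mul_nonsing_inv A hinv, one_mulVec]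
  have hUx : ∀ x, (Ω - W) *ᵥ x = u ⨯₃ x := by
    intro x
    rw [sub_mulVec, hΩ, hw, hω]
    simp [LinearMap.map_add]
  -- symmetry entries of V
  have e10 : V 0 1 = V 1 0 := congrFun (congrFun hV 1) 0
  have e20 : V 0 2 = V 2 0 := congrFun (congrFun hV 2) 0
  have e21 : V 1 2 = V 2 1 := congrFun (congrFun hV 2) 1
  have key : ∀ x : Fin 3 → ℝ, V *ᵥ (u ⨯₃ x) + u ⨯₃ (V *ᵥ x) = (A *ᵥ u) ⨯₃ x := by
    intro x
    ext i
    fin_cases i <;>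
      simp [hA, crossProduct, mulVec, dotProduct, trace, diag, Fin.sum_univ_succ,
        Matrix.one_apply, e10, e20, e21] <;> ring
  have hmain : D * V - V * D = V * (Ω - W) + (Ω - W) * V := by
    have hx : ∀ x, (D * V - V * D) *ᵥ x = (V * (Ω - W) + (Ω - W) * V) *ᵥ x := by
      intro x
      rw [hz, add_mulVec, ← mulVec_mulVec, ← mulVec_mulVec, hUx, hUx, key, hAu]
    ext i j
    have h := hx (Pi.single j 1)
    simpa [mulVec_single] using congrFun h i
  have hΩE : ∀ i j, Ω i j = (ω ⨯₃ Pi.single j 1) i := by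
    intro i j
    have h := congrFun (hΩ (Pi.single j 1)) i
    simpa [mulVec_single] using h
  have hΩskew : Ωᵀ = -Ω := by
    ext i j
    fin_cases i <;> fin_cases j <;>
      simp [hΩE, crossProduct, Pi.single_apply]
  have h3 : ((D + W) * V - V * Ω)ᵀ = V * (D - W) + Ω * V := by
    rw [transpose_sub, transpose_mul, transpose_mul, transpose_add, hV, hD, hW, hΩskew]
    noncomm_ring
  rw [h3]
  have h4 : V * (D - W) + Ω * V - ((D + W) * V - V * Ω)
      = (V * (Ω - W) + (Ω - W) * V) - (D * V - V * D) := by noncomm_ring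
  have h5 : V * (D - W) + Ω * V - ((D + W) * V - V * Ω) = 0 := by
    rw [h4, ← hmain, sub_self]
  exact eq_of_sub_eq_zero h5
end
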